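/- Every minimal prime ideal of the ring B = k[z][b_n : n ∈ ℤ]/(b_n^2 - (z+n)^2 : n ∈ ℤ) is of the form (b_n + (-1)^{ε(n)}(z+n) : n ∈ ℤ) for some choice of signs ε : ℤ → {0,1}. -/
import Mathlib


noncomputable section
open MvPolynomial

/-- The polynomial ring `k[z][b_n : n ∈ ℤ]`, with `z = X none`, `b_n = X (some n)`. -/
abbrev SB (k : Type) [Field k] := MvPolynomial (Option ℤ) k

/-- The variable `z`. -/
def zP (k : Type) [Field k] : SB k := X none

/-- The variable `b_n`. -/
def bP (k : Type) [Field k] (n : ℤ) : SB k := X (some n)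

/-- The ideal generated by `b_n^2 - (z+n)^2`, `n ∈ ℤ`. -/
def relB (k : Type) [Field k] : Ideal (SB k) :=
  Ideal.span (Set.range fun n : ℤ => bP k n ^ 2 - (zP k + (n : SB k)) ^ 2)

/-- The ring `B = k[z][b_n : n ∈ ℤ]/(b_n^2 - (z+n)^2 : n ∈ ℤ)`. -/
abbrev B (k : Type) [Field k] := SB k ⧸ relB k

/-- The image of `b_n` in `B`. -/
def bB (k : Type) [Field k] (n : ℤ) : B k := Ideal.Quotient.mk (relB k) (bP k n)

/-- The image of `z` in `B`. -/
def zB (k : Type) [Field k] : B k := Ideal.Quotient.mk (relB k) (zP k)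

set_option maxHeartbeats 1000000
set_option synthInstance.maxHeartbeats 400000

variable (k : Type) [Field k]

/-- sign function -/
def sg (ε : ℤ → Fin 2) (n : ℤ) : SB k := (-1) ^ (ε n : ℕ)

/-- generators upstairs -/
def genP (ε : ℤ → Fin 2) (n : ℤ) : SB k := bP k n + sg k ε n * (zP k + (n : SB k))

def JP (ε : ℤ → Fin 2) : Ideal (SB k) := Ideal.span (Set.range (genP k ε))

lemma sg_sq (ε : ℤ → Fin 2) (n : ℤ) : sg k ε n ^ 2 = 1 := by
  unfold sg
  rw [← pow_mul, mul_comm, pow_mul]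
  norm_num

lemma relB_le_JP (ε : ℤ → Fin 2) : relB k ≤ JP k ε := by
  rw [relB, Ideal.span_le]
  rintro _ ⟨n, rfl⟩
  show bP k n ^ 2 - (zP k + (n : SB k)) ^ 2 ∈ JP k ε
  have : bP k n ^ 2 - (zP k + (n : SB k)) ^ 2 =
      genP k ε n * (bP k n - sg k ε n * (zP k + (n : SB k))) := by
    have h := sg_sq k ε n
    unfold genP
    linear_combination ((zP k + (n : SB k)) ^ 2) * h
  rw [this]
  exact Ideal.mul_mem_right _ _ (Ideal.subset_span ⟨n, rfl⟩)

/-- evaluation map to k[t] -/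
def φ (ε : ℤ → Fin 2) : SB k →ₐ[k] Polynomial k :=
  aeval (fun i => match i with
    | none => Polynomial.X
    | some n => - ((-1:Polynomial k) ^ (ε n : ℕ)) * (Polynomial.X + (n : Polynomial k)))

/-- section -/
def ψ : Polynomial k →ₐ[k] SB k := Polynomial.aeval (X none)

lemma key (ε : ℤ → Fin 2) (p : SB k) : p - ψ k (φ k ε p) ∈ JP k ε := by
  induction p using MvPolynomial.induction_on with
  | C a => simp [φ, ψ]
  | add p q hp hq =>
      have : p + q - ψ k (φ k ε (p + q)) = (p - ψ k (φ k ε p)) + (q - ψ k (φ k ε q)) := by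
        simp; ring
      rw [this]; exact Ideal.add_mem _ hp hq
  | mul_X p i hp =>
      have hXi : X i - ψ k (φ k ε (X i)) ∈ JP k ε := by
        cases i with
        | none => simp [φ, ψ]
        | some n =>
            have : X (some n) - ψ k (φ k ε (X (some n))) = genP k ε n := by
              simp [φ, ψ, genP, bP, zP, sg]
            rw [this]
            exact Ideal.subset_span ⟨n, rfl⟩
      have : p * X i - ψ k (φ k ε (p * X i)) =
          (p - ψ k (φ k ε p)) * X i + ψ k (φ k ε p) * (X i - ψ k (φ k ε (X i))) := by
        simp; ring
      rw [this]
      exact Ideal.add_mem _ (Ideal.mul_mem_right _ _ hp) (Ideal.mul_mem_left _ _ hXi)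

lemma ker_φ (ε : ℤ → Fin 2) : RingHom.ker (φ k ε).toRingHom = JP k ε := by
  apply le_antisymm
  · intro p hp
    have h0 : φ k ε p = 0 := hp
    have := key k ε p
    rwa [h0, map_zero, sub_zero] at this
  · rw [JP, Ideal.span_le]
    rintro _ ⟨n, rfl⟩
    show φ k ε (genP k ε n) = 0
    simp [φ, genP, bP, zP, sg]

instance JP_prime (ε : ℤ → Fin 2) : (JP k ε).IsPrime := by
  rw [← ker_φ]
  exact RingHom.ker_isPrime _

/-- every minimal prime ideal of `B` is of the form
`(b_n + (-1)^{ε n}(z+n) : n ∈ ℤ)` for some choice of signs `ε : ℤ → {0,1}`. -/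
theorem stmt2 (k : Type) [Field k] [IsAlgClosed k] [CharZero k] :
    ∀ p ∈ minimalPrimes (B k), ∃ ε : ℤ → Fin 2,
      p = Ideal.span (Set.range fun n : ℤ =>
        bB k n + (-1) ^ (ε n : ℕ) * (zB k + (n : B k))) := by
  intro p hp
  have hprime : p.IsPrime := hp.1.1
  -- for each n, one of the two factors is in p
  have hfac : ∀ n : ℤ, (bB k n + (zB k + (n : B k))) ∈ p ∨
      (bB k n - (zB k + (n : B k))) ∈ p := by
    intro n
    have hsq : bB k n ^ 2 - (zB k + (n : B k)) ^ 2 = 0 := by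
      have hmem : bP k n ^ 2 - (zP k + (n : SB k)) ^ 2 ∈ relB k :=
        Ideal.subset_span ⟨n, rfl⟩
      have h := (Ideal.Quotient.eq_zero_iff_mem).2 hmem
      rw [bB, zB, ← map_intCast (Ideal.Quotient.mk (relB k)) n, ← map_add, ← map_pow,
        ← map_pow, ← map_sub]
      exact h
    have h0 : (bB k n + (zB k + (n : B k))) * (bB k n - (zB k + (n : B k))) = 0 := by
      linear_combination hsq
    have : (bB k n + (zB k + (n : B k))) * (bB k n - (zB k + (n : B k))) ∈ p := by
      rw [h0]; exact p.zero_mem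
    exact hprime.mem_or_mem this
  classical
  set ε : ℤ → Fin 2 := fun n => if (bB k n + (zB k + (n : B k))) ∈ p then 0 else 1 with hε
  refine ⟨ε, ?_⟩
  set J : Ideal (B k) := Ideal.span (Set.range fun n : ℤ =>
      bB k n + (-1) ^ (ε n : ℕ) * (zB k + (n : B k))) with hJ
  have hgen : ∀ n : ℤ, (bB k n + (-1) ^ (ε n : ℕ) * (zB k + (n : B k))) ∈ p := by
    intro n
    by_cases h : (bB k n + (zB k + (n : B k))) ∈ p
    · have : ε n = 0 := by simp [hε, h]
      rw [this]; simpa using h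
    · have he : ε n = 1 := by simp [hε, h]
      have h2 := (hfac n).resolve_left h
      rw [he, show ((1 : Fin 2) : ℕ) = 1 from rfl,
        show bB k n + (-1) ^ (1 : ℕ) * (zB k + (n : B k))
          = bB k n - (zB k + (n : B k)) by ring]
      exact h2
  have hJle : J ≤ p := by
    rw [hJ, Ideal.span_le]
    rintro _ ⟨n, rfl⟩
    exact hgen n

  -- J is the image of JP
  have hJmap : J = (JP k ε).map (Ideal.Quotient.mk (relB k)) := by
    rw [hJ, JP, Ideal.map_span, ← Set.range_comp]
    congr 1
  have hJprime : J.IsPrime := by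
    rw [hJmap]
    exact Ideal.map_isPrime_of_surjective Ideal.Quotient.mk_surjective
      (by rw [Ideal.mk_ker]; exact relB_le_JP k ε)
  exact le_antisymm (hp.2 ⟨hJprime, bot_le⟩ hJle) hJle
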